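/- arXiv:2012.06011 — 3 statements merged into one kernel-verified Lean document; each statement's English description precedes it below -/
import Mathlib

section
/- Let K be a lattice polytope in ℝ^n and let m ≥ n−1 be an integer. Then for every lattice point x ∈ mK there exist lattice points x_1, ..., x_{m−n+1} ∈ K ∩ ℤ^n and a lattice point x_0 ∈ (n−1)K ∩ ℤ^n such that x = x_0 + x_1 + ... + x_{m−n+1}. Equivalently, mK ∩ ℤ^n = ((n−1)K ∩ ℤ^n) + (m−n+1)·(K ∩ ℤ^n). -/
open Pointwise

/-- The set of lattice points (points with integer coordinates) of `ℝ^n`. -/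
def latticePoints (n : ℕ) : Set (Fin n → ℝ) := {x | ∀ i, ∃ z : ℤ, x i = (z : ℝ)}

/-- The `k`-fold Minkowski sum `A + A + ⋯ + A` (`k` times) of a subset `A` of `ℝ^n`
(by convention the `0`-fold sum is `{0}`). -/
def nsmulSet {n : ℕ} : ℕ → Set (Fin n → ℝ) → Set (Fin n → ℝ)
  | 0, _ => {0}
  | k + 1, A => A + nsmulSet k A

/-- A lattice polytope in `ℝ^n`: the convex hull of a finite nonempty set of lattice points. -/
def IsLatticePolytope {n : ℕ} (K : Set (Fin n → ℝ)) : Prop :=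
  ∃ S : Set (Fin n → ℝ), S.Finite ∧ S.Nonempty ∧ S ⊆ latticePoints n ∧ K = convexHull ℝ S

/-!
Let `z` be a lattice point of `(m + 1) • K`, `K` the convex hull of lattice points. By
Carathéodory, `z = ∑ cᵢ tᵢ` with affinely independent vertices `tᵢ`, `cᵢ ≥ 0` and `∑ cᵢ = m + 1`.
If some `cᵢ ≥ 1`, then `z - tᵢ ∈ m • K`. Otherwise there are `n + 1` vertices, `m + 1 = n`, and
`p = ∑ (1 - cᵢ) tᵢ = ∑ tᵢ - z` is a lattice point of `K`. Exchanging a suitable vertex `tⱼ` for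
`p` still writes `z` as a point of `n • K` and multiplies the determinant of the simplex, a
nonzero integer, by `1 - cⱼ ∈ (0, 1)`; so the process stops. Peeling off one lattice point of
`K` at a time, from `m • K` down to `(n - 1) • K`, gives the decomposition.
-/

lemma exists_one_le_of_card_le_sum {ι : Type*} {s : Finset ι} {f : ι → ℝ}
    (hpos : 0 < ∑ i ∈ s, f i) (hcard : (s.card : ℝ) ≤ ∑ i ∈ s, f i) : ∃ i ∈ s, 1 ≤ f i := by
  by_contra! hlt
  have hs : s.Nonempty := Finset.nonempty_of_sum_ne_zero hpos.ne'
  have := Finset.sum_lt_sum_of_nonempty hs hlt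
  simp only [Finset.sum_const, nsmul_eq_mul, mul_one] at this
  linarith

section Combinations

variable {ι E : Type*} [Fintype ι] [AddCommGroup E] [Module ℝ E] {K : Set E}

lemma Convex.sum_smul_mem_smul (hK : Convex ℝ K) (hne : K.Nonempty) {t : ι → E}
    (ht : ∀ i, t i ∈ K) {c : ι → ℝ} (hc : ∀ i, 0 ≤ c i) :
    ∑ i, c i • t i ∈ (∑ i, c i) • K := by
  rcases (Finset.sum_nonneg fun i _ => hc i).eq_or_lt with h0 | hpos
  · have hc0 : ∀ i ∈ Finset.univ, c i = 0 :=
      (Finset.sum_eq_zero_iff_of_nonneg fun i _ => hc i).1 h0.symm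
    rw [← h0, Set.zero_smul_set hne, Finset.sum_eq_zero fun i hi => by rw [hc0 i hi, zero_smul]]
    rfl
  · have hmem := hK.centerMass_mem (fun i _ => hc i) hpos fun i _ => ht i
    convert Set.smul_mem_smul_set (a := ∑ i, c i) hmem using 1
    rw [Finset.centerMass, smul_inv_smul₀ hpos.ne']

lemma Convex.sum_smul_sub_mem_smul [DecidableEq ι] (hK : Convex ℝ K) {t : ι → E}
    (ht : ∀ i, t i ∈ K) {c : ι → ℝ} (hc : ∀ i, 0 ≤ c i) {j : ι} (hj : 1 ≤ c j) :
    ∑ i, c i • t i - t j ∈ (∑ i, c i - 1) • K := by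
  have hc' : ∀ i, 0 ≤ c i - (Pi.single j 1 : ι → ℝ) i := fun i => by
    rcases eq_or_ne i j with rfl | hij
    · simpa using hj
    · simpa [hij] using hc i
  convert hK.sum_smul_mem_smul ⟨t j, ht j⟩ ht hc' using 2 <;>
    simp [sub_smul, Finset.sum_sub_distrib, Pi.single_apply, ite_smul]

lemma Fintype.sum_update_of_eq_zero {M : Type*} [AddCommMonoid M] [DecidableEq ι] (f : ι → M)
    {j : ι} (hj : f j = 0) (b : M) : ∑ i, Function.update f j b i = b + ∑ i, f i := by
  rw [Finset.sum_update_of_mem (Finset.mem_univ j), ← Finset.sum_sdiff (Finset.subset_univ {j})]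
  simp [hj]

end Combinations

section Lattice

variable {n : ℕ}

def latticeAddSubgroup (n : ℕ) : AddSubgroup (Fin n → ℝ) where
  carrier := latticePoints n
  add_mem' {x y} hx hy i := by
    obtain ⟨a, ha⟩ := hx i
    obtain ⟨b, hb⟩ := hy i
    exact ⟨a + b, by simp [ha, hb]⟩
  zero_mem' _ := ⟨0, by simp⟩
  neg_mem' {x} hx i := by
    obtain ⟨a, ha⟩ := hx i
    exact ⟨-a, by simp [ha]⟩

variable {K : Set (Fin n → ℝ)}

/-- Its determinant is `n!` times the signed volume of the simplex with vertices `t i`. -/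
def vertexMatrix (t : Fin (n + 1) → Fin n → ℝ) : Matrix (Fin (n + 1)) (Fin (n + 1)) ℝ :=
  Matrix.of fun i => Fin.cons 1 (t i)

lemma exists_intCast_eq_det_vertexMatrix {t : Fin (n + 1) → Fin n → ℝ}
    (ht : ∀ i, t i ∈ latticePoints n) : ∃ d : ℤ, (vertexMatrix t).det = d := by
  have hent : ∀ i j, ∃ z : ℤ, vertexMatrix t i j = z := fun i j =>
    Fin.cases ⟨1, by simp [vertexMatrix]⟩ (fun j => by simpa [vertexMatrix] using ht i j) j
  choose Z hZ using hent
  refine ⟨(Matrix.of Z).det, ?_⟩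
  have hmap : vertexMatrix t = (Int.castRingHom ℝ).mapMatrix (Matrix.of Z) := by
    ext i j
    simp [hZ]
  rw [hmap, ← RingHom.map_det]
  rfl

lemma det_vertexMatrix_ne_zero {t : Fin (n + 1) → Fin n → ℝ} (ht : AffineIndependent ℝ t) :
    (vertexMatrix t).det ≠ 0 := by
  intro hdet
  obtain ⟨v, hv, hva⟩ := Matrix.exists_vecMul_eq_zero_iff.2 hdet
  have hsum : ∑ i, v i = 0 := by
    simpa [Matrix.vecMul, dotProduct, vertexMatrix] using congrFun hva 0
  have hcomb : ∑ i, v i • t i = 0 := funext fun j => by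
    simpa [Matrix.vecMul, dotProduct, vertexMatrix, Finset.sum_apply] using congrFun hva j.succ
  exact hv (funext fun i => affineIndependent_iff.1 ht Finset.univ v hsum hcomb i
    (Finset.mem_univ i))

lemma det_vertexMatrix_update (t : Fin (n + 1) → Fin n → ℝ) {c : Fin (n + 1) → ℝ}
    (hc : ∑ i, c i = 1) (j : Fin (n + 1)) :
    (vertexMatrix (Function.update t j (∑ i, c i • t i))).det = c j * (vertexMatrix t).det := by
  have hrow : vertexMatrix (Function.update t j (∑ i, c i • t i))
      = (vertexMatrix t).updateRow j (∑ i, c i • vertexMatrix t i) := by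
    ext i k
    rcases eq_or_ne i j with rfl | hij
    · refine Fin.cases ?_ (fun k => ?_) k <;> simp [vertexMatrix, Finset.sum_apply, hc]
    · simp [vertexMatrix, hij]
  rw [hrow, Matrix.det_updateRow_sum, smul_eq_mul]

lemma sum_one_sub_eq_one_of_forall_lt_one {m : ℕ} (hm : n ≤ m + 1) {c : Fin (n + 1) → ℝ}
    (hc1 : ∀ i, c i < 1) (hsum : ∑ i, c i = m + 1) : ∑ i, (1 - c i) = 1 := by
  have hlt : (m : ℝ) + 1 < n + 1 := by
    by_contra! hge
    obtain ⟨i, -, hi⟩ := exists_one_le_of_card_le_sum (s := Finset.univ) (f := c)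
      (by rw [hsum]; positivity) (by simpa [hsum] using hge)
    exact (hc1 i).not_ge hi
  have hmn : m + 1 = n := by
    have : m + 1 < n + 1 := by exact_mod_cast hlt
    omega
  simp [Finset.sum_sub_distrib, hsum, ← hmn]

lemma pos_of_forall_lt_one {m : ℕ} (hm : n ≤ m + 1) {c : Fin (n + 1) → ℝ} (hc1 : ∀ i, c i < 1)
    (hsum : ∑ i, c i = m + 1) (i : Fin (n + 1)) : 0 < c i := by
  by_contra! hle
  have hmR : (n : ℝ) ≤ m + 1 := by exact_mod_cast hm
  have herase : ∑ k ∈ Finset.univ.erase i, c k = m + 1 - c i := by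
    rw [Finset.sum_erase_eq_sub (Finset.mem_univ i), hsum]
  obtain ⟨k, -, hk⟩ := exists_one_le_of_card_le_sum (s := Finset.univ.erase i) (f := c)
    (by rw [herase]; linarith [(m.cast_nonneg : (0 : ℝ) ≤ m)])
    (by rw [herase, Finset.card_erase_of_mem (Finset.mem_univ i), Finset.card_univ,
      Fintype.card_fin, add_tsub_cancel_right]; linarith)
  exact (hc1 k).not_ge hk

lemma exists_exchange_vertex (hK : Convex ℝ K) {m : ℕ} (hm : n ≤ m + 1)
    {t : Fin (n + 1) → Fin n → ℝ} (ht : ∀ i, t i ∈ K ∩ latticePoints n)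
    {c : Fin (n + 1) → ℝ} (hc0 : ∀ i, 0 ≤ c i) (hc1 : ∀ i, c i < 1)
    (hsum : ∑ i, c i = m + 1) (hz : ∑ i, c i • t i ∈ latticePoints n) :
    ∃ (t' : Fin (n + 1) → Fin n → ℝ) (c' : Fin (n + 1) → ℝ),
      (∀ i, t' i ∈ K ∩ latticePoints n) ∧ (∀ i, 0 ≤ c' i) ∧ ∑ i, c' i = m + 1 ∧
      ∑ i, c' i • t' i = ∑ i, c i • t i ∧
      ∃ r ∈ Set.Ioo (0 : ℝ) 1, (vertexMatrix t').det = r * (vertexMatrix t).det := by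
  have hcompl := sum_one_sub_eq_one_of_forall_lt_one hm hc1 hsum
  have hpos := pos_of_forall_lt_one hm hc1 hsum
  set p := ∑ i, (1 - c i) • t i with hp
  have hpK : p ∈ K := hK.sum_mem (fun i _ => sub_nonneg.2 (hc1 i).le) hcompl fun i _ => (ht i).1
  have hpL : p ∈ latticePoints n := by
    have : p = ∑ i, t i - ∑ i, c i • t i := by simp [hp, sub_smul, Finset.sum_sub_distrib]
    rw [this]
    exact (latticeAddSubgroup n).sub_mem
      ((latticeAddSubgroup n).sum_mem fun i _ => (ht i).2) hz
  -- Minimising `cᵢ / (1 - cᵢ)` keeps every new coefficient `cᵢ - a (1 - cᵢ)` nonnegative.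
  obtain ⟨j, -, hj⟩ := Finset.exists_min_image Finset.univ
    (fun i => c i / (1 - c i)) Finset.univ_nonempty
  set a := c j / (1 - c j)
  have hcj : 0 < 1 - c j := sub_pos.2 (hc1 j)
  have ha : ∀ i, a * (1 - c i) ≤ c i := fun i =>
    (le_div_iff₀ (sub_pos.2 (hc1 i))).1 (hj i (Finset.mem_univ i))
  have haj : c j - a * (1 - c j) = 0 := by
    rw [div_mul_cancel₀ _ hcj.ne', sub_self]
  refine ⟨Function.update t j p, Function.update (fun i => c i - a * (1 - c i)) j a,
    ?_, ?_, ?_, ?_, 1 - c j, ⟨hcj, by linarith [hpos j]⟩, det_vertexMatrix_update t hcompl j⟩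
  · intro i
    rcases eq_or_ne i j with rfl | hij
    · simpa using ⟨hpK, hpL⟩
    · simpa [hij] using ht i
  · intro i
    rcases eq_or_ne i j with rfl | hij
    · simpa using div_nonneg (hc0 i) hcj.le
    · simpa [hij] using ha i
  · rw [Fintype.sum_update_of_eq_zero (fun i => c i - a * (1 - c i)) haj]
    simp only [Finset.sum_sub_distrib, ← Finset.mul_sum, hcompl, hsum]
    ring
  · simp only [Function.apply_update₂ (fun _ (x : ℝ) (y : Fin n → ℝ) => x • y)]
    rw [Fintype.sum_update_of_eq_zero (fun i => (c i - a * (1 - c i)) • t i)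
      (show (c j - a * (1 - c j)) • t j = 0 by rw [haj, zero_smul])]
    simp only [sub_smul, Finset.sum_sub_distrib, mul_smul, ← Finset.smul_sum, hp]
    abel

lemma exists_sub_mem_smul_of_det_eq (hK : Convex ℝ K) {m : ℕ} (hm : n ≤ m + 1) (d : ℤ)
    (hd : d ≠ 0) {t : Fin (n + 1) → Fin n → ℝ} (ht : ∀ i, t i ∈ K ∩ latticePoints n)
    (hdet : (vertexMatrix t).det = d) {c : Fin (n + 1) → ℝ} (hc : ∀ i, 0 ≤ c i)
    (hsum : ∑ i, c i = m + 1) (hz : ∑ i, c i • t i ∈ latticePoints n) :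
    ∃ w ∈ K ∩ latticePoints n, ∑ i, c i • t i - w ∈ (m : ℝ) • K := by
  induction hN : d.natAbs using Nat.strong_induction_on generalizing d t c with
  | _ N ih =>
  by_cases hone : ∃ i, 1 ≤ c i
  · obtain ⟨i, hi⟩ := hone
    refine ⟨t i, ht i, ?_⟩
    simpa [hsum] using hK.sum_smul_sub_mem_smul (fun i => (ht i).1) hc hi
  · push Not at hone
    obtain ⟨t', c', ht', hc', hsum', hzc', r, ⟨hr0, hr1⟩, hdet'⟩ :=
      exists_exchange_vertex hK hm ht hc hone hsum hz
    obtain ⟨d', hd'⟩ := exists_intCast_eq_det_vertexMatrix fun i => (ht' i).2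
    have hdd' : (d' : ℝ) = r * d := by rw [← hd', hdet', hdet]
    have hd'0 : d' ≠ 0 := by
      rintro rfl
      simp [hr0.ne', hd] at hdd'
    have hlt : d'.natAbs < d.natAbs := by
      have hd_pos : (0 : ℝ) < |(d : ℝ)| := abs_pos.2 (Int.cast_ne_zero.2 hd)
      have : |(d' : ℝ)| < |(d : ℝ)| := by
        rw [hdd', abs_mul, abs_of_pos hr0]
        nlinarith
      rw [← Int.cast_abs, ← Int.cast_abs, Int.cast_lt, Int.abs_eq_natAbs,
        Int.abs_eq_natAbs] at this
      exact_mod_cast this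
    rw [← hzc']
    exact ih _ (hN ▸ hlt) d' hd'0 ht' hd' hc' hsum' (hzc' ▸ hz) rfl

lemma exists_sub_mem_smul_convexHull {S : Set (Fin n → ℝ)} (hS : S ⊆ latticePoints n) {m : ℕ}
    (hm : n ≤ m + 1) {z : Fin n → ℝ} (hz : z ∈ ((m + 1 : ℕ) : ℝ) • convexHull ℝ S)
    (hzL : z ∈ latticePoints n) :
    ∃ w ∈ convexHull ℝ S ∩ latticePoints n, z - w ∈ (m : ℝ) • convexHull ℝ S := by
  classical
  obtain ⟨y, hy, rfl⟩ := hz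
  obtain ⟨ι, _, v, w, hvS, hv, hw0, hw1, rfl⟩ := eq_pos_convex_span_of_mem_convexHull hy
  have hvK : ∀ i, v i ∈ convexHull ℝ S ∩ latticePoints n := fun i =>
    ⟨subset_convexHull ℝ S (hvS ⟨i, rfl⟩), hS (hvS ⟨i, rfl⟩)⟩
  set c : ι → ℝ := fun i => (m + 1) * w i
  have hc : ∀ i, 0 ≤ c i := fun i => mul_nonneg (by positivity) (hw0 i).le
  have hsum : ∑ i, c i = m + 1 := by rw [← Finset.mul_sum, hw1, mul_one]
  have hz : ((m + 1 : ℕ) : ℝ) • ∑ i, w i • v i = ∑ i, c i • v i := by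
    simp [c, Finset.smul_sum, mul_smul]
  beta_reduce at hzL ⊢
  rw [hz] at hzL ⊢
  have hcard : Fintype.card ι ≤ n + 1 := by
    simpa [Module.finrank_fin_fun] using hv.card_le_finrank_succ.trans
      (Nat.succ_le_succ (Submodule.finrank_le _))
  rcases hcard.lt_or_eq with hlt | heq
  · obtain ⟨i, -, hi⟩ := exists_one_le_of_card_le_sum (s := Finset.univ) (f := c)
      (by rw [hsum]; positivity) (by rw [hsum, Finset.card_univ]; exact_mod_cast (by omega))
    refine ⟨v i, hvK i, ?_⟩
    simpa [hsum] using (convex_convexHull ℝ S).sum_smul_sub_mem_smul (fun i => (hvK i).1) hc hi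
  · let e := (Fintype.equivFinOfCardEq heq).symm
    obtain ⟨d, hd⟩ := exists_intCast_eq_det_vertexMatrix fun i => (hvK (e i)).2
    have hd0 : d ≠ 0 := by
      rintro rfl
      exact det_vertexMatrix_ne_zero (hv.comp_embedding e.toEmbedding)
        (by simpa [Function.comp_def] using hd)
    rw [← e.sum_comp] at hzL ⊢
    exact exists_sub_mem_smul_of_det_eq (convex_convexHull ℝ S) hm d hd0 (fun i => hvK (e i)) hd
      (fun i => hc (e i)) (by rwa [e.sum_comp]) hzL

lemma add_mem_smul_inter_latticePoints (hK : Convex ℝ K) {a b : ℝ} (ha : 0 ≤ a) (hb : 0 ≤ b)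
    {x y : Fin n → ℝ} (hx : x ∈ a • K ∩ latticePoints n) (hy : y ∈ b • K ∩ latticePoints n) :
    x + y ∈ (a + b) • K ∩ latticePoints n :=
  ⟨hK.add_smul ha hb ▸ Set.add_mem_add hx.1 hy.1, (latticeAddSubgroup n).add_mem hx.2 hy.2⟩

lemma smul_convexHull_inter_latticePoints_eq_add {S : Set (Fin n → ℝ)}
    (hS : S ⊆ latticePoints n) {a : ℕ} (ha : n ≤ a + 1) (k : ℕ) :
    ((a + k : ℕ) : ℝ) • convexHull ℝ S ∩ latticePoints n =
      (a : ℝ) • convexHull ℝ S ∩ latticePoints n +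
        nsmulSet k (convexHull ℝ S ∩ latticePoints n) := by
  induction k with
  | zero => simp [nsmulSet]
  | succ k ih =>
    ext x
    constructor
    · rintro ⟨hx, hxL⟩
      obtain ⟨w, hw, hxw⟩ := exists_sub_mem_smul_convexHull hS (m := a + k) (by omega) hx hxL
      obtain ⟨x₀, hx₀, y, hy, hxy⟩ :=
        Set.mem_add.1 (ih.subset ⟨hxw, (latticeAddSubgroup n).sub_mem hxL hw.2⟩)
      refine Set.mem_add.2 ⟨x₀, hx₀, w + y, Set.add_mem_add hw hy, ?_⟩
      rw [add_left_comm, hxy, add_sub_cancel]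
    · intro hx
      obtain ⟨x₀, hx₀, _, hwy, rfl⟩ := Set.mem_add.1 hx
      obtain ⟨w, hw, y, hy, rfl⟩ := Set.mem_add.1 hwy
      have := add_mem_smul_inter_latticePoints (convex_convexHull ℝ S) (by positivity) zero_le_one
        (ih.superset (Set.add_mem_add hx₀ hy)) (by rwa [one_smul])
      rwa [show x₀ + (w + y) = x₀ + y + w by abel,
        show ((a + (k + 1) : ℕ) : ℝ) = (a + k : ℕ) + 1 by push_cast; ring]

end Lattice

/-- Let `K` be a lattice polytope in `ℝ^n` and `m ≥ n - 1` an integer.  Then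
`mK ∩ ℤ^n = ((n-1)K ∩ ℤ^n) + (m-n+1)(K ∩ ℤ^n)`: every lattice point of the dilate `mK`
is a sum of a lattice point of `(n-1)K` and `m - n + 1` lattice points of `K`. -/
theorem lattice_polytope_decomposition (n m : ℕ) (hm : n - 1 ≤ m)
    (K : Set (Fin n → ℝ)) (hK : IsLatticePolytope K) :
    ((m : ℝ) • K) ∩ latticePoints n =
      (((n - 1 : ℕ) : ℝ) • K) ∩ latticePoints n +
        nsmulSet (m + 1 - n) (K ∩ latticePoints n) := by
  obtain ⟨S, -, hne, hS, rfl⟩ := hK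
  rcases Nat.eq_zero_or_pos n with rfl | hn
  · obtain ⟨p, hp⟩ := hne.mono (subset_convexHull ℝ S)
    have hL (x : Fin 0 → ℝ) : x ∈ latticePoints 0 := fun i => i.elim0
    have huniv (k : ℕ) : (k : ℝ) • convexHull ℝ S ∩ latticePoints 0 = Set.univ :=
      Set.Nonempty.eq_univ ⟨_, Set.smul_mem_smul_set hp, hL _⟩
    rw [← smul_convexHull_inter_latticePoints_eq_add hS le_add_self, huniv, huniv]
  · have := smul_convexHull_inter_latticePoints_eq_add hS (a := n - 1) (by omega) (m + 1 - n)
    rwa [show n - 1 + (m + 1 - n) = m by omega] at this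
end

section
/- For every n ≥ 4 there exists a lattice simplex K ⊆ ℝ^n with nonempty interior such that for every integer i with 2 ≤ i ≤ n−2, the equality nK ∩ ℤ^n = ((n−i)K ∩ ℤ^n) + (iK ∩ ℤ^n) fails, and also the equality (n−1)K ∩ ℤ^n = ((n−2)K ∩ ℤ^n) + (K ∩ ℤ^n) fails. (One may take K to be the convex hull of {0, e_1, ..., e_{n−1}, a} with a = (a(1), ..., a(n−1), d)^T, 0 < a(i) < d, and Σ a(i) < d.) -/
open Pointwise

/-!
Take `n = m + 1` and `K = conv {0, e₁, …, e_m, a}` with `a = (1, …, 1, n)`. The all-ones point `𝟙`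
is a lattice point of `(n - 1) K`, hence of `r K` for every `r ≥ n - 1`. Every point of `r K`
satisfies `x_n ≥ 0`, `x_n ≤ n x_j` and `n ∑_{j < n} x_j - (n - 2) x_n ≤ n r`. For a lattice point
with `x_n = 1` the second inequality gives `x_j ≥ 1`, and then the third forces `r > n - 2`.
If `𝟙 = y + z` with lattice points `y ∈ p K`, `z ∈ q K`, then `y_n, z_n` are nonnegative integers
with sum `1`, so one of them is `1` and `max p q > n - 2`. Hence `𝟙` is not in any of the sums
in the statement, all of which have `p, q ≤ n - 2`.
-/

open Set

section ConvexHull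

variable {E : Type*} [AddCommGroup E] [Module ℝ E]

theorem LinearMap.le_mul_of_mem_smul_convexHull (f : E →ₗ[ℝ] ℝ) {s : Set E} {c r : ℝ}
    (hr : 0 ≤ r) (hs : ∀ x ∈ s, f x ≤ c) {y : E} (hy : y ∈ r • convexHull ℝ s) :
    f y ≤ r * c := by
  obtain ⟨x, hx, rfl⟩ := hy
  rw [map_smul, smul_eq_mul]
  exact mul_le_mul_of_nonneg_left (convexHull_min hs (convex_halfSpace_le f.isLinear c) hx) hr

theorem sum_smul_mem_smul_convexHull_insert_zero {ι : Type*} [Fintype ι] (v : ι → E)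
    {μ : ι → ℝ} {r : ℝ} (hr : 0 < r) (hμ : ∀ i, 0 ≤ μ i) (hsum : ∑ i, μ i ≤ r) :
    ∑ i, μ i • v i ∈ r • convexHull ℝ (insert 0 (range v)) := by
  rw [mem_smul_set_iff_inv_smul_mem₀ hr.ne', Finset.smul_sum]
  let w : Option ι → ℝ := fun o => o.elim (1 - ∑ i, r⁻¹ * μ i) (fun i => r⁻¹ * μ i)
  let z : Option ι → E := fun o => o.elim 0 v
  have hw : ∑ o, w o = 1 := by simp [w, Fintype.sum_option]
  have hwz : ∑ i, r⁻¹ • μ i • v i = ∑ o, w o • z o := by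
    simp [w, z, Fintype.sum_option, smul_smul]
  rw [hwz]
  refine (convex_convexHull ℝ _).sum_mem (fun o _ => ?_) hw (fun o _ => ?_)
  · rcases o with _ | i
    · have : ∑ i, r⁻¹ * μ i ≤ 1 := by
        rwa [← Finset.mul_sum, inv_mul_le_one₀ hr]
      simpa [w] using this
    · exact mul_nonneg (inv_nonneg.2 hr.le) (hμ i)
  · rcases o with _ | i
    · exact subset_convexHull ℝ _ (mem_insert _ _)
    · exact subset_convexHull ℝ _ (mem_insert_of_mem _ (mem_range_self i))

theorem LinearIndependent.affineIndependent_insert_zero {ι : Type*} {v : ι → E}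
    (hv : LinearIndependent ℝ v) :
    AffineIndependent ℝ ((↑) : (insert 0 (range v) : Set E) → E) := by
  have h := (linearIndependent_set_iff_affineIndependent_vadd_union_singleton ℝ
    (s := range v) (by rintro _ ⟨i, rfl⟩; exact hv.ne_zero i) (0 : E)).1 hv.linearIndepOn_id
  rwa [show ({0} ∪ (· +ᵥ (0 : E)) '' range v : Set E) = insert 0 (range v) by simp] at h

theorem affineSpan_insert_zero_eq_top {s : Set E} (hs : Submodule.span ℝ s = ⊤) :
    affineSpan ℝ (insert 0 s) = ⊤ := by
  rw [← AffineSubspace.coe_eq_univ_iff, affineSpan_insert_zero, hs, Submodule.top_coe]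

end ConvexHull

namespace SharpSimplex

variable (m : ℕ)

def apex : Fin (m + 1) → ℝ := Fin.snoc (fun _ => 1) (m + 1 : ℝ)

def vertex : Fin (m + 1) → Fin (m + 1) → ℝ :=
  Fin.snoc (fun j => Pi.single j.castSucc 1) (apex m)

def vertices : Set (Fin (m + 1) → ℝ) := insert 0 (range (vertex m))

variable {m}

theorem forall_mem_vertices {P : (Fin (m + 1) → ℝ) → Prop} :
    (∀ x ∈ vertices m, P x) ↔ P 0 ∧ P (apex m) ∧ ∀ j : Fin m, P (Pi.single j.castSucc 1) := by
  simp [vertices, vertex]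

theorem vertices_subset_latticePoints : vertices m ⊆ latticePoints (m + 1) := by
  refine forall_mem_vertices (P := (· ∈ latticePoints (m + 1))) |>.2
    ⟨fun i => ⟨0, by simp⟩, fun i => ?_, fun j i => ?_⟩
  · induction i using Fin.lastCases with
    | last => exact ⟨m + 1, by simp [apex]⟩
    | cast j => exact ⟨1, by simp [apex]⟩
  · by_cases h : i = j.castSucc
    · exact ⟨1, by simp [h]⟩
    · exact ⟨0, by simp [h]⟩

theorem linearIndependent_vertex : LinearIndependent ℝ (vertex m) := by
  refine LinearIndependent.finSnoc ?_ ?_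
  · simpa [Function.comp_def] using
      (Pi.basisFun ℝ (Fin (m + 1))).linearIndependent.comp _ (Fin.castSucc_injective m)
  · have hspan : Submodule.span ℝ (range fun j : Fin m => (Pi.single j.castSucc 1 : _ → ℝ)) ≤
        LinearMap.ker (LinearMap.proj (Fin.last m)) := by
      rw [Submodule.span_le]
      rintro _ ⟨j, rfl⟩
      simp
    intro h
    have := hspan h
    simp only [LinearMap.mem_ker, LinearMap.proj_apply, apex, Fin.snoc_last] at this
    exact Nat.cast_add_one_ne_zero m this

theorem span_range_vertex : Submodule.span ℝ (range (vertex m)) = ⊤ :=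
  linearIndependent_vertex.span_eq_top_of_card_eq_finrank' (by simp)

local notation "coord" => LinearMap.proj (R := ℝ) (φ := fun _ : Fin (m + 1) => ℝ)

theorem last_nonneg_of_mem_smul {r : ℝ} (hr : 0 ≤ r) {y : Fin (m + 1) → ℝ}
    (hy : y ∈ r • convexHull ℝ (vertices m)) : 0 ≤ y (Fin.last m) := by
  have hm : (0 : ℝ) ≤ m := m.cast_nonneg
  have := (-coord (Fin.last m)).le_mul_of_mem_smul_convexHull hr (c := 0)
    (forall_mem_vertices.2 ⟨by simp, by simp [apex]; linarith, by simp⟩) hy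
  simpa using this

theorem last_le_of_mem_smul {r : ℝ} (hr : 0 ≤ r) {y : Fin (m + 1) → ℝ}
    (hy : y ∈ r • convexHull ℝ (vertices m)) (j : Fin m) :
    y (Fin.last m) ≤ (m + 1) * y j.castSucc := by
  have hm : (0 : ℝ) ≤ m := m.cast_nonneg
  have := (coord (Fin.last m) - ((m : ℝ) + 1) • coord j.castSucc).le_mul_of_mem_smul_convexHull
    hr (c := 0) (forall_mem_vertices.2 ⟨by simp, by simp [apex],
      fun k => by rcases eq_or_ne k j with rfl | h <;> simp [*]; linarith⟩) hy
  simpa [sub_nonpos] using this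

theorem sum_le_of_mem_smul {r : ℝ} (hr : 0 ≤ r) {y : Fin (m + 1) → ℝ}
    (hy : y ∈ r • convexHull ℝ (vertices m)) :
    (m + 1) * ∑ j : Fin m, y j.castSucc - (m - 1) * y (Fin.last m) ≤ r * (m + 1) := by
  have := (((m : ℝ) + 1) • ∑ j : Fin m, coord j.castSucc - ((m : ℝ) - 1) • coord (Fin.last m)
    ).le_mul_of_mem_smul_convexHull hr (c := m + 1) (forall_mem_vertices.2
      ⟨by simp; positivity, by simp [apex]; linarith, fun k => by simp [Pi.single_apply]⟩) hy
  simpa using this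

theorem last_ne_one_of_mem_smul {r : ℝ} (hr : 0 ≤ r) (hrm : r + 1 ≤ m)
    {w : Fin (m + 1) → ℝ} (hw : w ∈ latticePoints (m + 1))
    (hwK : w ∈ r • convexHull ℝ (vertices m)) : w (Fin.last m) ≠ 1 := by
  intro hlast
  have hone (j : Fin m) : 1 ≤ w j.castSucc := by
    obtain ⟨z, hz⟩ := hw j.castSucc
    have hle := last_le_of_mem_smul hr hwK j
    rw [hlast, hz] at hle
    have hpos : (0 : ℝ) < z := by nlinarith [(m.cast_nonneg : (0 : ℝ) ≤ m)]
    rw [hz]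
    exact_mod_cast (Int.cast_pos.1 hpos : 0 < z)
  have hsum : (m : ℝ) ≤ ∑ j : Fin m, w j.castSucc := by
    simpa using Finset.sum_le_sum fun j (_ : j ∈ Finset.univ) => hone j
  have := sum_le_of_mem_smul hr hwK
  rw [hlast] at this
  nlinarith

theorem one_mem_smul_convexHull_vertices (hm : 1 ≤ m) {r : ℝ} (hr : m ≤ r) :
    (1 : Fin (m + 1) → ℝ) ∈ r • convexHull ℝ (vertices m) := by
  have hm' : (1 : ℝ) ≤ m := by exact_mod_cast hm
  -- `𝟙 = a / (m + 1) + ∑ⱼ m / (m + 1) • eⱼ`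
  let μ : Fin (m + 1) → ℝ := Fin.snoc (fun _ => m / (m + 1)) (1 / (m + 1))
  have hμ : ∑ i, μ i • vertex m i = 1 := by
    ext i
    induction i using Fin.lastCases with
    | last => simp [μ, vertex, Fin.sum_univ_castSucc, apex]; field_simp
    | cast j => simp [μ, vertex, Fin.sum_univ_castSucc, apex, Pi.single_apply]; field_simp
  rw [← hμ]
  refine sum_smul_mem_smul_convexHull_insert_zero _ (by linarith) (fun i => ?_) ?_
  · induction i using Fin.lastCases <;> simp [μ] <;> positivity
  · simp [μ, Fin.sum_univ_castSucc]
    have hsum : (m : ℝ) * (m / (m + 1)) + ((m : ℝ) + 1)⁻¹ = m - (m - 1) / (m + 1) := by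
      field_simp
      ring
    have : 0 ≤ ((m : ℝ) - 1) / (m + 1) := div_nonneg (by linarith) (by positivity)
    linarith

theorem one_notMem_add {p q : ℕ} (hp : p + 1 ≤ m) (hq : q + 1 ≤ m) :
    (1 : Fin (m + 1) → ℝ) ∉ ((p : ℝ) • convexHull ℝ (vertices m)) ∩ latticePoints (m + 1) +
      ((q : ℝ) • convexHull ℝ (vertices m)) ∩ latticePoints (m + 1) := by
  rintro ⟨y, ⟨hyK, hy⟩, z, ⟨hzK, hz⟩, hyz⟩
  have hp' : (p : ℝ) + 1 ≤ m := by exact_mod_cast hp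
  have hq' : (q : ℝ) + 1 ≤ m := by exact_mod_cast hq
  have hsum : y (Fin.last m) + z (Fin.last m) = 1 := by simpa using congrFun hyz (Fin.last m)
  have hy0 := last_nonneg_of_mem_smul p.cast_nonneg hyK
  have hz0 := last_nonneg_of_mem_smul q.cast_nonneg hzK
  obtain ⟨a, ha⟩ := hy (Fin.last m)
  obtain ⟨b, hb⟩ := hz (Fin.last m)
  rw [ha] at hsum hy0
  rw [hb] at hsum hz0
  have : a + b = 1 := by exact_mod_cast hsum
  have : 0 ≤ a := by exact_mod_cast hy0
  have : 0 ≤ b := by exact_mod_cast hz0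
  rcases (by omega : a = 1 ∨ b = 1) with rfl | rfl
  · exact last_ne_one_of_mem_smul p.cast_nonneg hp' hy hyK (by simp [ha])
  · exact last_ne_one_of_mem_smul q.cast_nonneg hq' hz hzK (by simp [hb])

end SharpSimplex

open SharpSimplex in
/-- For every `n ≥ 4` there is a lattice simplex `K ⊆ ℝ^n` (the convex hull of a finite
affinely independent set of lattice points) with nonempty interior such that for every
integer `i` with `2 ≤ i ≤ n - 2` the equality `nK ∩ ℤ^n = ((n-i)K ∩ ℤ^n) + (iK ∩ ℤ^n)`
fails, and the equality `(n-1)K ∩ ℤ^n = ((n-2)K ∩ ℤ^n) + (K ∩ ℤ^n)` also fails. -/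
theorem exists_sharp_simplex (n : ℕ) (hn : 4 ≤ n) :
    ∃ K : Set (Fin n → ℝ),
      (∃ S : Set (Fin n → ℝ), S.Finite ∧ S ⊆ latticePoints n ∧
        AffineIndependent ℝ ((↑) : S → (Fin n → ℝ)) ∧ K = convexHull ℝ S) ∧
      (interior K).Nonempty ∧
      (∀ i : ℕ, 2 ≤ i → i ≤ n - 2 →
        ((n : ℝ) • K) ∩ latticePoints n ≠
          (((n - i : ℕ) : ℝ) • K) ∩ latticePoints n +
            ((i : ℝ) • K) ∩ latticePoints n) ∧
      ((n - 1 : ℕ) : ℝ) • K ∩ latticePoints n ≠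
        (((n - 2 : ℕ) : ℝ) • K) ∩ latticePoints n + (K ∩ latticePoints n) := by
  obtain ⟨m, rfl⟩ : ∃ m, n = m + 1 := ⟨n - 1, by omega⟩
  have one_mem {r : ℝ} (hr : m ≤ r) :
      (1 : Fin (m + 1) → ℝ) ∈ r • convexHull ℝ (vertices m) ∩ latticePoints (m + 1) :=
    ⟨one_mem_smul_convexHull_vertices (by omega) hr, fun _ => ⟨1, by simp⟩⟩
  refine ⟨convexHull ℝ (vertices m), ⟨vertices m, (finite_range _).insert 0,
    vertices_subset_latticePoints, linearIndependent_vertex.affineIndependent_insert_zero, rfl⟩,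
    interior_convexHull_nonempty_iff_affineSpan_eq_top.2
      (affineSpan_insert_zero_eq_top span_range_vertex), fun i hi2 hin h => ?_, fun h => ?_⟩
  · refine one_notMem_add (m := m) (p := m + 1 - i) (q := i) (by omega) (by omega) ?_
    exact h ▸ one_mem (by push_cast; linarith)
  · have := one_notMem_add (m := m) (p := m + 1 - 2) (q := 1) (by omega) (by omega)
    rw [Nat.cast_one, one_smul, ← h] at this
    exact this (one_mem (by simp))
end

section
/- Let K be a projectively faithful lattice polytope in ℝ^n. If K is locally solid (i.e., for every extreme point v of K the set C_v = ⋃_{m≥1} m·((K − v) ∩ ℤ^n) is unperforated), then there exists an integer m ≥ n−1 such that mK ∩ ℤ^n = m·(K ∩ ℤ^n). -/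
open Pointwise

/-- A lattice polytope is projectively faithful if the differences of its lattice points
generate the full lattice `ℤ^n` as an abelian group. -/
def ProjectivelyFaithful {n : ℕ} (K : Set (Fin n → ℝ)) : Prop :=
  (AddSubgroup.closure ((K ∩ latticePoints n) - (K ∩ latticePoints n)) :
    Set (Fin n → ℝ)) = latticePoints n

/-- The lattice cone `C_v = ⋃_{m ≥ 1} m((K - v) ∩ ℤ^n)` at a point `v`, where `m(⬝)` is
the `m`-fold Minkowski sum. -/
def latticeCone {n : ℕ} (K : Set (Fin n → ℝ)) (v : Fin n → ℝ) : Set (Fin n → ℝ) :=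
  ⋃ (m : ℕ) (_ : 1 ≤ m), nsmulSet m (((fun x => x - v) '' K) ∩ latticePoints n)

/-- `C_v` is unperforated: any lattice point with a positive multiple in `C_v` is itself
in `C_v`. -/
def Unperforated {n : ℕ} (C : Set (Fin n → ℝ)) : Prop :=
  ∀ x ∈ latticePoints n, ∀ m : ℕ, 0 < m → (m : ℝ) • x ∈ C → x ∈ C

/-- A lattice polytope is locally solid if the cone `C_v` is unperforated for every
extreme point `v` of `K`. -/
def LocallySolid {n : ℕ} (K : Set (Fin n → ℝ)) : Prop :=
  ∀ v ∈ K.extremePoints ℝ, Unperforated (latticeCone K v)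

/-
Write a lattice point `x ∈ mK` as `m • p`. The point `p` is rational, so by Carathéodory it is a
convex combination of affinely independent vertices `z i` with rational weights `w i`, and some
vertex `v` carries weight at least `1/(n+1)`. Splitting `m * w i` into integer and fractional
parts writes `x` as a sum of lattice points of `K` plus the remainder
`r = ∑ fract (m * w i) • (z i - v)`: a lattice point of norm at most `(n+1) diam K`, with a
positive multiple in `C_v`, hence in `C_v` by unperforation. Only finitely many such remainders
exist, so all of them are sums of `c` points of `(K - v) ∩ ℤ^n` for one `c`; with `m = (n+1)c`
the vertex `v` occurs at least `c` times and absorbs them, giving `x ∈ m(K ∩ ℤ^n)`.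
-/

theorem AffineIndependent.weight_mem_range_algebraMap {F L ι κ : Type*} [Field F] [Field L]
    [Algebra F L] [Fintype ι] {p : ι → κ → L} (hp : AffineIndependent L p)
    (hpF : ∀ i j, p i j ∈ Set.range (algebraMap F L)) {w : ι → L} (hw : ∑ i, w i = 1)
    (hwp : ∀ j, (∑ i, w i • p i) j ∈ Set.range (algebraMap F L)) (i : ι) :
    w i ∈ Set.range (algebraMap F L) := by
  -- an `F`-linear retraction `φ : L → F` preserves the affine combination when applied to the
  -- weights, so affine independence forces `w i = φ (w i)`
  obtain ⟨φ, hφ⟩ := (Algebra.linearMap F L).exists_leftInverse_of_injective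
    (LinearMap.ker_eq_bot.2 (algebraMap F L).injective)
  have hφ_alg (a : F) : φ (algebraMap F L a) = a := LinearMap.congr_fun hφ a
  have hφ_mul (c : L) (a : F) : φ (c * algebraMap F L a) = φ c * a := by
    rw [mul_comm, ← Algebra.smul_def, φ.map_smul, smul_eq_mul, mul_comm]
  set w' : ι → L := fun i => algebraMap F L (φ (w i))
  choose a ha using hpF
  have hw' : ∑ i, w' i = 1 := by
    rw [← map_sum, ← map_sum, hw, ← map_one (algebraMap F L), hφ_alg, map_one]
  have hw'p : ∑ i, w' i • p i = ∑ i, w i • p i := by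
    funext j
    obtain ⟨b, hb⟩ := hwp j
    simp only [Finset.sum_apply, Pi.smul_apply, smul_eq_mul, ← ha] at hb ⊢
    rw [← hb, ← hφ_alg b, hb, map_sum]
    simp only [hφ_mul, map_sum, map_mul, w']
  have := (affineIndependent_iff_eq_of_fintype_affineCombination_eq L p).1 hp w' w hw' hw
    (by simp only [Finset.affineCombination_eq_linear_combination _ _ _ hw',
      Finset.affineCombination_eq_linear_combination _ _ _ hw, hw'p])
  exact ⟨φ (w i), congr_fun this i⟩

theorem exists_nat_mul_eq_intCast {ι : Type*} [Finite ι] {q : ι → ℝ}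
    (hq : ∀ i, q i ∈ Set.range (algebraMap ℚ ℝ)) :
    ∃ d : ℕ, 0 < d ∧ ∀ i, ∃ k : ℤ, (d : ℝ) * q i = k := by
  choose r hr using hq
  obtain ⟨b, hb⟩ := IsLocalization.exist_integer_multiples_of_finite (nonZeroDivisors ℤ) r
  have hb0 : (b : ℤ) ≠ 0 := nonZeroDivisors.coe_ne_zero b
  refine ⟨(b : ℤ).natAbs, Int.natAbs_pos.2 hb0, fun i => ?_⟩
  obtain ⟨k, hk⟩ := hb i
  have hbk : ((b : ℤ) : ℝ) * q i = k := by
    rw [eq_intCast, zsmul_eq_mul] at hk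
    rw [← hr i, eq_ratCast]; exact_mod_cast hk.symm
  rcases Int.natAbs_eq (b : ℤ) with h | h
  · exact ⟨k, by rw [← hbk, h]; simp⟩
  · exact ⟨-k, by rw [Int.cast_neg, ← hbk, h]; simp⟩

theorem exists_sum_smul_eq_floor_add {ι E : Type*} [Fintype ι] [AddCommGroup E] [Module ℝ E]
    {μ : ι → ℝ} (hμ : ∀ i, 0 ≤ μ i) {M : ℕ} (hM : ∑ i, μ i = M) (z : ι → E) (v : E) :
    ∃ s : ℕ, ∑ i, ⌊μ i⌋₊ + s = M ∧
      ∑ i, μ i • z i = ∑ i, ⌊μ i⌋₊ • z i + s • v + ∑ i, (μ i - ⌊μ i⌋₊) • (z i - v) := by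
  have hle : ∑ i, ⌊μ i⌋₊ ≤ M := by
    have : ((∑ i, ⌊μ i⌋₊ : ℕ) : ℝ) ≤ M := by
      rw [← hM, Nat.cast_sum]; exact Finset.sum_le_sum fun i _ => Nat.floor_le (hμ i)
    exact_mod_cast this
  refine ⟨M - ∑ i, ⌊μ i⌋₊, Nat.add_sub_cancel' hle, ?_⟩
  have hs : ((M - ∑ i, ⌊μ i⌋₊ : ℕ) : ℝ) = ∑ i, (μ i - ⌊μ i⌋₊) := by
    rw [Nat.cast_sub hle, Finset.sum_sub_distrib, hM, Nat.cast_sum]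
  simp only [← Nat.cast_smul_eq_nsmul ℝ, hs, smul_sub, Finset.sum_sub_distrib, ← Finset.sum_smul,
    sub_smul]
  abel

theorem exists_one_div_le_of_sum_eq_one {ι : Type*} [Fintype ι] {w : ι → ℝ} (hw : ∑ i, w i = 1)
    {N : ℝ} (hN : Fintype.card ι ≤ N) : ∃ i, 1 / N ≤ w i := by
  have hι : Nonempty ι := by
    by_contra hι
    simp [not_nonempty_iff.1 hι] at hw
  obtain ⟨i, -, hi⟩ := Finset.exists_le_of_sum_le (f := fun _ => 1 / N) Finset.univ_nonempty
    (by rw [hw, Finset.sum_const, Finset.card_univ, nsmul_eq_mul, mul_one_div]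
        exact div_le_one_of_le₀ hN ((Fintype.card ι).cast_nonneg.trans hN))
  exact ⟨i, hi⟩

theorem exists_natCast_eq_mul_sub_floor {d : ℕ} {x : ℝ} (hx : 0 ≤ x) {k : ℤ} (hk : d * x = k) :
    ∃ l : ℕ, (d : ℝ) * (x - ⌊x⌋₊) = l := by
  have hnonneg : 0 ≤ k - d * ⌊x⌋₊ := by
    have : (0 : ℝ) ≤ d * (x - ⌊x⌋₊) := mul_nonneg d.cast_nonneg (sub_nonneg.2 (Nat.floor_le hx))
    rw [mul_sub, hk] at this
    exact_mod_cast this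
  obtain ⟨l, hl⟩ := Int.eq_ofNat_of_zero_le hnonneg
  refine ⟨l, ?_⟩
  rw [mul_sub, hk]
  exact_mod_cast hl

theorem norm_sum_smul_sub_le_card_mul_diam {ι E : Type*} [Fintype ι] [SeminormedAddCommGroup E]
    [NormedSpace ℝ E] {K : Set E} (hK : Bornology.IsBounded K) {z : ι → E} (hz : ∀ i, z i ∈ K)
    {v : E} (hv : v ∈ K) {g : ι → ℝ} (hg : ∀ i, g i ∈ Set.Icc 0 1) :
    ‖∑ i, g i • (z i - v)‖ ≤ Fintype.card ι * Metric.diam K := by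
  calc ‖∑ i, g i • (z i - v)‖ ≤ ∑ i, ‖g i • (z i - v)‖ := norm_sum_le _ _
    _ ≤ ∑ _i : ι, Metric.diam K := Finset.sum_le_sum fun i _ => by
        rw [norm_smul, Real.norm_of_nonneg (hg i).1, ← dist_eq_norm]
        exact (mul_le_of_le_one_left dist_nonneg (hg i).2).trans
          (Metric.dist_le_diam_of_mem hK (hz i) hv)
    _ = Fintype.card ι * Metric.diam K := by rw [Finset.sum_const, nsmul_eq_mul, Finset.card_univ]

theorem Set.sum_nsmul_mem_nsmul {ι α : Type*} [AddCommMonoid α] {A : Set α} (s : Finset ι)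
    (a : ι → ℕ) {z : ι → α} (hz : ∀ i ∈ s, z i ∈ A) : ∑ i ∈ s, a i • z i ∈ (∑ i ∈ s, a i) • A := by
  rw [← Finset.sum_nsmul_assoc]
  exact Set.finsetSum_mem_finsetSum _ _ _ fun i hi => Set.nsmul_mem_nsmul (hz i hi)

theorem Convex.nsmul_eq_smul {E : Type*} [AddCommGroup E] [Module ℝ E] {K : Set E}
    (hK : Convex ℝ K) (hne : K.Nonempty) (k : ℕ) : k • K = (k : ℝ) • K := by
  induction k with
  | zero => rw [zero_nsmul, Nat.cast_zero, Set.zero_smul_set hne]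
  | succ k ih => rw [succ_nsmul, ih, Nat.cast_succ, hK.add_smul k.cast_nonneg zero_le_one, one_smul]

theorem latticePoints_eq_span (n : ℕ) :
    latticePoints n = Submodule.span ℤ (Set.range (Pi.basisFun ℝ (Fin n))) := by
  ext x
  simp only [latticePoints, SetLike.mem_coe, Module.Basis.mem_span_iff_repr_mem, Pi.basisFun_repr,
    Set.mem_range, eq_intCast, Set.mem_ofPred_eq, eq_comm]

theorem finite_latticePoints_inter {n : ℕ} {s : Set (Fin n → ℝ)} (hs : Bornology.IsBounded s) :
    (s ∩ latticePoints n).Finite := by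
  rw [latticePoints_eq_span]; exact ZSpan.setFinite_inter _ hs

theorem apply_mem_range_algebraMap_of_mem_latticePoints {n : ℕ} {x : Fin n → ℝ}
    (hx : x ∈ latticePoints n) (j : Fin n) : x j ∈ Set.range (algebraMap ℚ ℝ) := by
  obtain ⟨z, hz⟩ := hx j; exact ⟨z, by simp [hz]⟩

theorem nsmulSet_eq_nsmul {n : ℕ} (k : ℕ) (A : Set (Fin n → ℝ)) : nsmulSet k A = k • A := by
  induction k with
  | zero => rfl
  | succ k ih => rw [nsmulSet, ih, succ_nsmul']

theorem exists_rat_weights_of_mem_convexHull {n : ℕ} {V : Set (Fin n → ℝ)}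
    (hV : V ⊆ latticePoints n) {p : Fin n → ℝ} (hp : p ∈ convexHull ℝ V)
    (hpQ : ∀ j, p j ∈ Set.range (algebraMap ℚ ℝ)) :
    ∃ (ι : Type) (_ : Fintype ι) (z : ι → Fin n → ℝ) (w : ι → ℝ), Set.range z ⊆ V ∧
      Fintype.card ι ≤ n + 1 ∧ (∀ i, 0 ≤ w i) ∧ ∑ i, w i = 1 ∧ ∑ i, w i • z i = p ∧
      ∀ i, w i ∈ Set.range (algebraMap ℚ ℝ) := by
  obtain ⟨ι, _, z, w, hzV, hz, hw0, hw1, hwz⟩ := eq_pos_convex_span_of_mem_convexHull hp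
  refine ⟨ι, inferInstance, z, w, hzV, ?_, fun i => (hw0 i).le, hw1, hwz,
    hz.weight_mem_range_algebraMap
      (fun i => apply_mem_range_algebraMap_of_mem_latticePoints (hV (hzV ⟨i, rfl⟩))) hw1
      (hwz ▸ hpQ)⟩
  have := (Submodule.finrank_le (vectorSpan ℝ (Set.range z))).trans_eq (Module.finrank_fin_fun ℝ)
  exact hz.card_le_finrank_succ.trans (Nat.succ_le_succ this)

namespace IsLatticePolytope

variable {n : ℕ} {K : Set (Fin n → ℝ)}

theorem extremePoints_subset_latticePoints (hK : IsLatticePolytope K) :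
    K.extremePoints ℝ ⊆ latticePoints n := by
  obtain ⟨S, -, -, hSL, rfl⟩ := hK
  exact extremePoints_convexHull_subset.trans hSL

theorem finite_extremePoints (hK : IsLatticePolytope K) : (K.extremePoints ℝ).Finite := by
  obtain ⟨S, hS, -, -, rfl⟩ := hK
  exact hS.subset extremePoints_convexHull_subset

theorem isCompact (hK : IsLatticePolytope K) : IsCompact K := by
  obtain ⟨S, hS, -, -, rfl⟩ := hK
  exact hS.isCompact_convexHull ℝ

theorem convex (hK : IsLatticePolytope K) : Convex ℝ K := by
  obtain ⟨S, -, -, -, rfl⟩ := hK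
  exact convex_convexHull ℝ S

theorem nonempty (hK : IsLatticePolytope K) : K.Nonempty := by
  obtain ⟨S, -, hS, -, rfl⟩ := hK
  exact hS.mono (subset_convexHull ℝ S)

theorem convexHull_extremePoints (hK : IsLatticePolytope K) :
    convexHull ℝ (K.extremePoints ℝ) = K := by
  rw [← (hK.finite_extremePoints.isCompact_convexHull ℝ).isClosed.closure_eq,
    closure_convexHull_extremePoints hK.isCompact hK.convex]

end IsLatticePolytope

theorem nsmul_inter_latticePoints_subset {n : ℕ} {K : Set (Fin n → ℝ)} (hK : IsLatticePolytope K)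
    (m : ℕ) : m • (K ∩ latticePoints n) ⊆ ((m : ℝ) • K) ∩ latticePoints n := by
  refine Set.subset_inter ?_ ?_
  · rw [← hK.convex.nsmul_eq_smul hK.nonempty]
    exact Set.nsmul_subset_nsmul_left Set.inter_subset_left
  · rw [latticePoints_eq_span, ← Submodule.coe_toAddSubgroup]
    exact AddSubgroup.nsmul_subset Set.inter_subset_right

section LatticeCone

variable {n : ℕ} {K : Set (Fin n → ℝ)} {v : Fin n → ℝ}

theorem mem_latticeCone_iff {r : Fin n → ℝ} :
    r ∈ latticeCone K v ↔ ∃ m, 1 ≤ m ∧ r ∈ m • (((fun x => x - v) '' K) ∩ latticePoints n) := by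
  simp only [latticeCone, nsmulSet_eq_nsmul, Set.mem_iUnion, exists_prop]

theorem zero_mem_sub_image_inter_latticePoints (hv : v ∈ K ∩ latticePoints n) :
    0 ∈ ((fun x => x - v) '' K) ∩ latticePoints n := by
  refine ⟨⟨v, hv.1, sub_self v⟩, ?_⟩
  rw [latticePoints_eq_span]; exact zero_mem _

theorem mem_latticeCone_of_natCast_smul_eq_sum {ι : Type*} [Fintype ι]
    (hv : v ∈ K ∩ latticePoints n) (hunp : Unperforated (latticeCone K v))
    {r : Fin n → ℝ} (hr : r ∈ latticePoints n) {d : ℕ} (hd : 0 < d) {b : ι → Fin n → ℝ}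
    (hb : ∀ i, b i ∈ ((fun x => x - v) '' K) ∩ latticePoints n) (k : ι → ℕ)
    (hrb : (d : ℝ) • r = ∑ i, k i • b i) : r ∈ latticeCone K v := by
  refine hunp r hr d hd (mem_latticeCone_iff.2 ⟨∑ i, k i + 1, le_add_self, ?_⟩)
  rw [hrb]
  exact Set.nsmul_subset_nsmul_right (zero_mem_sub_image_inter_latticePoints hv) le_self_add
    (Set.sum_nsmul_mem_nsmul _ k fun i _ => hb i)

theorem add_nsmul_mem_nsmul_inter_latticePoints (hv : v ∈ latticePoints n) {c : ℕ}
    {r : Fin n → ℝ} (hr : r ∈ c • (((fun x => x - v) '' K) ∩ latticePoints n)) :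
    r + c • v ∈ c • (K ∩ latticePoints n) := by
  have hsub : ((fun x => x - v) '' K) ∩ latticePoints n + {v} ⊆ K ∩ latticePoints n := by
    rintro _ ⟨_, ⟨⟨y, hy, rfl⟩, hyv⟩, _, rfl, rfl⟩
    refine ⟨by simpa using hy, ?_⟩
    rw [latticePoints_eq_span] at *
    simpa using add_mem hyv hv
  refine Set.nsmul_subset_nsmul_left hsub ?_
  rw [nsmul_add]
  exact Set.add_mem_add hr (Set.nsmul_mem_nsmul rfl)

open Filter in
theorem eventually_mem_nsmul_of_mem_latticeCone {V s : Set (Fin n → ℝ)} (hV : V.Finite)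
    (hVK : V ⊆ K ∩ latticePoints n) (hs : Bornology.IsBounded s) :
    ∀ᶠ c : ℕ in atTop, ∀ v ∈ V, ∀ r ∈ s ∩ latticePoints n, r ∈ latticeCone K v →
      r ∈ c • (((fun x => x - v) '' K) ∩ latticePoints n) := by
  rw [eventually_all_finite hV]
  intro v hv
  rw [eventually_all_finite (finite_latticePoints_inter hs)]
  intro r _
  by_cases hr : r ∈ latticeCone K v
  · obtain ⟨m, -, hrm⟩ := mem_latticeCone_iff.1 hr
    filter_upwards [eventually_ge_atTop m] with c hc _
    exact Set.nsmul_subset_nsmul_right (zero_mem_sub_image_inter_latticePoints (hVK hv)) hc hrm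
  · exact Eventually.of_forall fun _ hr' => absurd hr' hr

end LatticeCone

section Decomposition

variable {n : ℕ} {K : Set (Fin n → ℝ)} {ι : Type*} [Fintype ι] {z : ι → Fin n → ℝ}
  {μ : ι → ℝ} {M d c : ℕ} {R : ℝ}

theorem sum_smul_add_nsmul_mem_nsmul (hK : Bornology.IsBounded K) {v : Fin n → ℝ}
    (hv : v ∈ K ∩ latticePoints n) (hunp : Unperforated (latticeCone K v))
    (hz : ∀ i, z i ∈ K ∩ latticePoints n) (hμ : ∀ i, 0 ≤ μ i) (hM : ∑ i, μ i = M)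
    (hd : 0 < d) (hdμ : ∀ i, ∃ k : ℤ, d * μ i = k) (hx : ∑ i, μ i • z i ∈ latticePoints n)
    (hR : Fintype.card ι * Metric.diam K ≤ R)
    (hc : ∀ r ∈ Metric.closedBall 0 R ∩ latticePoints n, r ∈ latticeCone K v →
      r ∈ c • (((fun x => x - v) '' K) ∩ latticePoints n)) :
    ∑ i, μ i • z i + c • v ∈ (M + c) • (K ∩ latticePoints n) := by
  obtain ⟨s, hsM, hdecomp⟩ := exists_sum_smul_eq_floor_add hμ hM z v
  set g : ι → ℝ := fun i => μ i - ⌊μ i⌋₊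
  set r := ∑ i, g i • (z i - v)
  have hg : ∀ i, g i ∈ Set.Icc 0 1 := fun i =>
    ⟨sub_nonneg.2 (Nat.floor_le (hμ i)), sub_le_iff_le_add'.2 (Nat.lt_floor_add_one _).le⟩
  have hrL : r ∈ latticePoints n := by
    have hr : r = ∑ i, μ i • z i - (∑ i, ⌊μ i⌋₊ • z i + s • v) := by rw [hdecomp]; abel
    rw [hr]
    rw [latticePoints_eq_span] at hv hz hx ⊢
    exact sub_mem hx (add_mem (sum_mem fun i _ => nsmul_mem (hz i).2 _) (nsmul_mem hv.2 _))
  have hdg : ∀ i, ∃ k : ℕ, (d : ℝ) * g i = k := fun i =>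
    let ⟨k, hk⟩ := hdμ i
    exists_natCast_eq_mul_sub_floor (hμ i) hk
  choose k hk using hdg
  have hrC : r ∈ latticeCone K v := by
    refine mem_latticeCone_of_natCast_smul_eq_sum hv hunp hrL hd
      (b := fun i => z i - v) (fun i => ⟨⟨z i, (hz i).1, rfl⟩, ?_⟩) k ?_
    · rw [latticePoints_eq_span] at hv hz ⊢; exact sub_mem (hz i).2 hv.2
    · simp only [r, Finset.smul_sum, smul_smul, hk, Nat.cast_smul_eq_nsmul]
  have hrc : r ∈ c • (((fun x => x - v) '' K) ∩ latticePoints n) := by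
    refine hc r ⟨?_, hrL⟩ hrC
    rw [mem_closedBall_zero_iff]
    exact (norm_sum_smul_sub_le_card_mul_diam hK (fun i => (hz i).1) hv.1 hg).trans hR
  rw [hdecomp, add_assoc, ← hsM, add_nsmul, add_nsmul]
  exact Set.add_mem_add (Set.add_mem_add (Set.sum_nsmul_mem_nsmul _ _ fun i _ => hz i)
    (Set.nsmul_mem_nsmul hv)) (add_nsmul_mem_nsmul_inter_latticePoints hv.2 hrc)

theorem sum_smul_mem_nsmul_of_le_weight (hK : Bornology.IsBounded K)
    (h : ∀ i, Unperforated (latticeCone K (z i)))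
    (hz : ∀ i, z i ∈ K ∩ latticePoints n) (hμ : ∀ i, 0 ≤ μ i) (hM : ∑ i, μ i = M)
    (hd : 0 < d) (hdμ : ∀ i, ∃ k : ℤ, d * μ i = k) (hx : ∑ i, μ i • z i ∈ latticePoints n)
    (hR : Fintype.card ι * Metric.diam K ≤ R) {i₀ : ι} (hi₀ : c ≤ μ i₀)
    (hc : ∀ r ∈ Metric.closedBall 0 R ∩ latticePoints n, r ∈ latticeCone K (z i₀) →
      r ∈ c • (((fun x => x - z i₀) '' K) ∩ latticePoints n)) :
    ∑ i, μ i • z i ∈ M • (K ∩ latticePoints n) := by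
  classical
  -- move `c` units of weight from `z i₀` into the `c • z i₀` term
  set μ' : ι → ℝ := fun i => μ i - if i = i₀ then (c : ℝ) else 0
  have hμ' : ∀ i, 0 ≤ μ' i := fun i => by
    by_cases h : i = i₀ <;> simp [μ', h, hμ, hi₀]
  have hcM : c ≤ M := by
    have : μ i₀ ≤ M := hM ▸ Finset.single_le_sum (fun i _ => hμ i) (Finset.mem_univ i₀)
    exact_mod_cast hi₀.trans this
  have hM' : ∑ i, μ' i = (M - c : ℕ) := by
    simp [μ', Finset.sum_sub_distrib, hM, Nat.cast_sub hcM]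
  have hsum : ∑ i, μ' i • z i + c • z i₀ = ∑ i, μ i • z i := by
    simp [μ', sub_smul, Finset.sum_sub_distrib, ite_smul, Nat.cast_smul_eq_nsmul]
  have hdμ' : ∀ i, ∃ k : ℤ, d * μ' i = k := fun i => by
    obtain ⟨k, hk⟩ := hdμ i
    refine ⟨k - if i = i₀ then d * c else 0, ?_⟩
    simp only [μ', mul_sub, hk]
    split_ifs <;> push_cast <;> ring
  have hx' : ∑ i, μ' i • z i ∈ latticePoints n := by
    rw [eq_sub_of_add_eq hsum]
    rw [latticePoints_eq_span] at hx hz ⊢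
    exact sub_mem hx (nsmul_mem (hz i₀).2 c)
  have := sum_smul_add_nsmul_mem_nsmul hK (hz i₀) (h i₀) hz hμ' hM' hd hdμ' hx' hR hc
  rwa [hsum, Nat.sub_add_cancel hcM] at this

end Decomposition

theorem smul_inter_latticePoints_subset_nsmul {n : ℕ} {K : Set (Fin n → ℝ)}
    (hK : IsLatticePolytope K) (h : LocallySolid K) {c : ℕ} (hc1 : 1 ≤ c)
    (hc : ∀ v ∈ K.extremePoints ℝ, ∀ r ∈ Metric.closedBall 0 ((n + 1) * Metric.diam K) ∩
      latticePoints n, r ∈ latticeCone K v → r ∈ c • (((fun x => x - v) '' K) ∩ latticePoints n)) :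
    ((((n + 1) * c : ℕ) : ℝ) • K) ∩ latticePoints n ⊆ ((n + 1) * c) • (K ∩ latticePoints n) := by
  rintro _ ⟨⟨p, hp, rfl⟩, hx⟩
  set m := (n + 1) * c
  have hm : (m : ℝ) ≠ 0 := Nat.cast_ne_zero.2 (Nat.mul_ne_zero n.succ_ne_zero (by omega))
  have hpQ : ∀ j, p j ∈ Set.range (algebraMap ℚ ℝ) := fun j => by
    obtain ⟨q, hq⟩ := apply_mem_range_algebraMap_of_mem_latticePoints hx j
    refine ⟨q / m, ?_⟩
    rw [map_div₀, hq, map_natCast]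
    exact mul_div_cancel_left₀ (p j) hm
  rw [← hK.convexHull_extremePoints] at hp
  obtain ⟨ι, _, z, w, hzV, hcard, hw0, hw1, hwp, hwQ⟩ :=
    exists_rat_weights_of_mem_convexHull hK.extremePoints_subset_latticePoints hp hpQ
  obtain ⟨d, hd, hdw⟩ := exists_nat_mul_eq_intCast hwQ
  have hzK : ∀ i, z i ∈ K ∩ latticePoints n := fun i =>
    ⟨extremePoints_subset (hzV ⟨i, rfl⟩), hK.extremePoints_subset_latticePoints (hzV ⟨i, rfl⟩)⟩
  have hcard' : (Fintype.card ι : ℝ) ≤ n + 1 := by exact_mod_cast hcard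
  obtain ⟨i₀, hi₀⟩ := exists_one_div_le_of_sum_eq_one hw1 hcard'
  have hci₀ : (c : ℝ) ≤ m * w i₀ := by
    calc (c : ℝ) = m * (1 / (n + 1)) := by simp only [m]; push_cast; field_simp
      _ ≤ m * w i₀ := by gcongr
  have := sum_smul_mem_nsmul_of_le_weight (μ := fun i => m * w i) (M := m)
    (R := (n + 1) * Metric.diam K) hK.isCompact.isBounded (fun i => h _ (hzV ⟨i, rfl⟩)) hzK
    (fun i => mul_nonneg m.cast_nonneg (hw0 i)) (by rw [← Finset.mul_sum, hw1, mul_one]) hd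
    (fun i => let ⟨k, hk⟩ := hdw i; ⟨m * k, by push_cast; rw [← hk]; ring⟩)
    (by simpa only [← smul_smul, ← Finset.smul_sum, hwp] using hx)
    (by gcongr) hci₀ (hc _ (hzV ⟨i₀, rfl⟩))
  simpa only [← smul_smul, ← Finset.smul_sum, hwp] using this

theorem exists_dilate_of_locallySolid_general (n : ℕ) (K : Set (Fin n → ℝ))
    (hK : IsLatticePolytope K) (h : LocallySolid K) :
    ∃ m : ℕ, n - 1 ≤ m ∧
      ((m : ℝ) • K) ∩ latticePoints n = nsmulSet m (K ∩ latticePoints n) := by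
  obtain ⟨c, hc1, hc⟩ := ((Filter.eventually_ge_atTop 1).and
    (eventually_mem_nsmul_of_mem_latticeCone hK.finite_extremePoints
      (fun v hv => ⟨extremePoints_subset hv, hK.extremePoints_subset_latticePoints hv⟩)
      (Metric.isBounded_closedBall (x := 0) (r := (n + 1) * Metric.diam K)))).exists
  refine ⟨(n + 1) * c, (by omega : n - 1 ≤ n + 1).trans (Nat.le_mul_of_pos_right _ hc1), ?_⟩
  rw [nsmulSet_eq_nsmul]
  exact (smul_inter_latticePoints_subset_nsmul hK h hc1 hc).antisymm
    (nsmul_inter_latticePoints_subset hK _)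

/-- Let `K` be a projectively faithful lattice polytope in `ℝ^n`.  If `K` is locally
solid, then there is an integer `m ≥ n - 1` with `mK ∩ ℤ^n = m(K ∩ ℤ^n)`. -/
theorem exists_dilate_of_locallySolid (n : ℕ) (K : Set (Fin n → ℝ))
    (hK : IsLatticePolytope K) (hpf : ProjectivelyFaithful K)
    (h : LocallySolid K) :
    ∃ m : ℕ, n - 1 ≤ m ∧
      ((m : ℝ) • K) ∩ latticePoints n = nsmulSet m (K ∩ latticePoints n) :=
  exists_dilate_of_locallySolid_general n K hK h
end
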